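/- Let M be an n×n matrix, q ∈ ℝⁿ, F(x) = (M+I)x + (M−I)|x| + q, and F̃(p,x) = (M+I)x + (1/p)(M−I)·ln(1 + e^{px} + e^{-px}) + q (applied componentwise inside the logarithm). Then for all x ∈ ℝⁿ and all p > 0, ‖F̃(p,x) − F(x)‖ ≤ (ln 3 / p)·‖M − I‖·√n, where ‖M − I‖ is the operator norm. Consequently F̃(p,·) → F uniformly on ℝⁿ as p → +∞. -/

import Mathlib

/-!
Since `exp |t| ≤ 1 + exp t + exp (-t) ≤ 3 * exp |t|`, the smoothed absolute value
`(1/p) * log (1 + exp (p t) + exp (-p t))` lies between `|t|` and `|t| + log 3 / p`.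
The difference `F̃(p, x) - F(x)` is `M - 1` applied to the vector of these errors, whose sup norm is
at most `log 3 / p` and whose Euclidean norm is therefore at most `√n * log 3 / p`.
-/

open Matrix Real

theorem abs_le_log_one_add_exp_add_exp_neg (t : ℝ) : |t| ≤ log (1 + exp t + exp (-t)) := by
  rw [← log_exp |t|]
  refine log_le_log (exp_pos _) ?_
  rcases abs_cases t with ⟨h, _⟩ | ⟨h, _⟩ <;> rw [h] <;> linarith [exp_pos t, exp_pos (-t)]

theorem log_one_add_exp_add_exp_neg_le (t : ℝ) : log (1 + exp t + exp (-t)) ≤ log 3 + |t| := by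
  rw [← log_exp |t|, ← log_mul (by norm_num) (exp_ne_zero _)]
  refine log_le_log (by positivity) ?_
  linarith [one_le_exp (abs_nonneg t), exp_le_exp.2 (le_abs_self t), exp_le_exp.2 (neg_le_abs t)]

noncomputable def smoothAbs (p t : ℝ) : ℝ :=
  1 / p * log (1 + exp (p * t) + exp (-(p * t)))

theorem abs_smoothAbs_sub_abs_le {p : ℝ} (hp : 0 < p) (t : ℝ) :
    abs (smoothAbs p t - |t|) ≤ log 3 / p := by
  have hpt : |p * t| = p * |t| := by rw [abs_mul, abs_of_pos hp]
  have lower := abs_le_log_one_add_exp_add_exp_neg (p * t)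
  have upper := log_one_add_exp_add_exp_neg_le (p * t)
  rw [hpt] at lower upper
  have key :
      smoothAbs p t - |t| = (log (1 + exp (p * t) + exp (-(p * t))) - p * |t|) / p := by
    rw [smoothAbs]; field_simp
  rw [key, abs_div, abs_of_pos hp]
  gcongr
  rw [abs_le]
  constructor <;> linarith [log_nonneg (by norm_num : (1 : ℝ) ≤ 3)]

theorem PiLp.norm_toLp_two_le_sqrt_card_mul_norm {ι : Type*} [Fintype ι] {β : Type*}
    [SeminormedAddCommGroup β] (v : ι → β) :
    ‖WithLp.toLp 2 v‖ ≤ √(Fintype.card ι) * ‖v‖ := by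
  have := (PiLp.lipschitzWith_toLp 2 (fun _ : ι => β)).norm_le_mul (WithLp.toLp_zero 2) v
  simpa [Real.sqrt_eq_rpow] using this

theorem Matrix.norm_toLp_mulVec_le {ι : Type*} [Fintype ι] [DecidableEq ι] (A : Matrix ι ι ℝ)
    (v : ι → ℝ) :
    ‖WithLp.toLp 2 (A *ᵥ v)‖ ≤ ‖toEuclideanCLM (𝕜 := ℝ) (n := ι) A‖ * √(Fintype.card ι) * ‖v‖ := by
  rw [mul_assoc, ← toEuclideanCLM_toLp]
  exact (ContinuousLinearMap.le_opNorm _ _).trans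
    (mul_le_mul_of_nonneg_left (PiLp.norm_toLp_two_le_sqrt_card_mul_norm v) (norm_nonneg _))

theorem exists_forall_lt_of_le_const_div {α : Type*} {g : ℝ → α → ℝ} {C : ℝ}
    (hg : ∀ p > 0, ∀ x, g p x ≤ C / p) :
    ∀ ε > 0, ∃ P > 0, ∀ p > P, ∀ x, g p x < ε := by
  intro ε hε
  refine ⟨|C| / ε + 1, by positivity, fun p hp x => ?_⟩
  have hp0 : 0 < p := lt_trans (by positivity) hp
  calc g p x ≤ C / p := hg p hp0 x
    _ ≤ |C| / p := by gcongr; exact le_abs_self C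
    _ < ε := by
      rw [div_lt_iff₀ hp0]
      have : |C| / ε < p := by linarith
      rw [div_lt_iff₀ hε] at this
      linarith

theorem stmt_12 {n : ℕ} (M : Matrix (Fin n) (Fin n) ℝ) (q : Fin n → ℝ) :
    let F : (Fin n → ℝ) → (Fin n → ℝ) :=
      fun x => (M + 1).mulVec x + (M - 1).mulVec (fun i => |x i|) + q
    let Ft : ℝ → (Fin n → ℝ) → (Fin n → ℝ) := fun p x =>
      (M + 1).mulVec x +
        (M - 1).mulVec (fun i => (1 / p) * Real.log (1 + Real.exp (p * x i) +
          Real.exp (-(p * x i)))) + q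
    let e := (WithLp.equiv 2 (Fin n → ℝ)).symm
    (∀ x : Fin n → ℝ, ∀ p : ℝ, 0 < p →
      ‖e (Ft p x) - e (F x)‖ ≤
        (Real.log 3 / p) * ‖Matrix.toEuclideanCLM (𝕜 := ℝ) (n := Fin n) (M - 1)‖ * Real.sqrt n) ∧
    ∀ ε > (0 : ℝ), ∃ P > (0 : ℝ), ∀ p > P, ∀ x : Fin n → ℝ,
      ‖e (Ft p x) - e (F x)‖ < ε := by
  intro F Ft e
  set K := ‖toEuclideanCLM (𝕜 := ℝ) (n := Fin n) (M - 1)‖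
  have bound (x : Fin n → ℝ) (p : ℝ) (hp : 0 < p) :
      ‖e (Ft p x) - e (F x)‖ ≤ (log 3 / p) * K * √n := by
    set d : Fin n → ℝ := fun i => smoothAbs p (x i) - |x i|
    have hdiff : e (Ft p x) - e (F x) = WithLp.toLp 2 ((M - 1) *ᵥ d) := by
      have hFt : Ft p x - F x = (M - 1) *ᵥ d := by
        change _ = (M - 1) *ᵥ ((fun i => smoothAbs p (x i)) - fun i => |x i|)
        rw [mulVec_sub]
        simp only [Ft, F, smoothAbs]
        abel
      rw [← hFt]
      rfl
    have hd : ‖d‖ ≤ log 3 / p := (pi_norm_le_iff_of_nonneg (by positivity)).2 fun i =>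
      (Real.norm_eq_abs _).trans_le (abs_smoothAbs_sub_abs_le hp (x i))
    calc ‖e (Ft p x) - e (F x)‖
        ≤ K * √(Fintype.card (Fin n)) * ‖d‖ := hdiff ▸ norm_toLp_mulVec_le (M - 1) d
      _ ≤ K * √(Fintype.card (Fin n)) * (log 3 / p) := by gcongr
      _ = _ := by rw [Fintype.card_fin]; ring
  exact ⟨bound, exists_forall_lt_of_le_const_div (C := log 3 * K * √n)
    fun p hp x => (bound x p hp).trans_eq (by ring)⟩
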